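/- Let Q ∈ ℂ^{2n×2n} be Hamiltonian, let λ ∈ ℂ, and let x, y ∈ ℂ^{2n} satisfy Q x = λ x, Q^H y = conj(λ) · y, and y^H x ≠ 0. If the rank-one matrix y x^H is Hamiltonian, then λ is purely imaginary, i.e. Re λ = 0. -/

import Mathlib

/-!
Hamiltonicity of `Q` means `Qᴴ J = -J Q`, so `J` turns the right eigenvector `x` for `λ` into a
left eigenvector `J x` for `-λ`. Hamiltonicity of `y xᴴ`, applied to `x`, shows that `J x` is a
multiple of `y`, which is a left eigenvector for `conj λ`. As `J x ≠ 0`, this forces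
`-λ = conj λ`.
-/

open Matrix

noncomputable def frobNorm {m k : Type*} [Fintype m] [Fintype k] (M : Matrix m k ℂ) : ℝ :=
  Real.sqrt (∑ i, ∑ j, ‖M i j‖ ^ 2)

noncomputable def Jmat (n : ℕ) : Matrix (Fin n ⊕ Fin n) (Fin n ⊕ Fin n) ℂ :=
  Matrix.fromBlocks 0 1 (-1) 0

def IsHamiltonian {n : ℕ} (Q : Matrix (Fin n ⊕ Fin n) (Fin n ⊕ Fin n) ℂ) : Prop :=
  Q * Jmat n = (Q * Jmat n)ᴴ

/-- The projection of a matrix onto the set of Hamiltonian matrices. -/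
noncomputable def hamProj {n : ℕ} (M : Matrix (Fin n ⊕ Fin n) (Fin n ⊕ Fin n) ℂ) :
    Matrix (Fin n ⊕ Fin n) (Fin n ⊕ Fin n) ℂ :=
  (1 / 2 : ℂ) • (M + Jmat n * Mᴴ * Jmat n)

theorem eq_of_mulVec_eq_smul_of_smul_eq_smul {ι K : Type*} [Fintype ι] [Field K]
    {A : Matrix ι ι K} {μ ν a b : K} {u v : ι → K} (hu : A *ᵥ u = μ • u) (hv : A *ᵥ v = ν • v)
    (hu0 : u ≠ 0) (ha : a ≠ 0) (hab : a • u = b • v) : μ = ν := by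
  have hA : a • μ • u = ν • a • u := by
    rw [← hu, ← mulVec_smul, hab, mulVec_smul, hv, smul_comm b ν]
  rw [smul_comm a μ] at hA
  exact smul_left_injective K (smul_ne_zero ha hu0) hA

section Jmat

variable {n : ℕ}

theorem Jmat_conjTranspose : (Jmat n)ᴴ = -Jmat n := by
  simp [Jmat, fromBlocks_conjTranspose, fromBlocks_neg]

theorem Jmat_mul_Jmat : Jmat n * Jmat n = -1 := by
  simp [Jmat, fromBlocks_multiply, fromBlocks_neg, ← fromBlocks_one]

theorem Jmat_mulVec_Jmat_mulVec (x : Fin n ⊕ Fin n → ℂ) : Jmat n *ᵥ Jmat n *ᵥ x = -x := by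
  rw [mulVec_mulVec, Jmat_mul_Jmat, neg_mulVec, one_mulVec]

theorem Jmat_mulVec_ne_zero {x : Fin n ⊕ Fin n → ℂ} (hx : x ≠ 0) : Jmat n *ᵥ x ≠ 0 := by
  intro h
  apply hx
  rw [← neg_eq_zero, ← Jmat_mulVec_Jmat_mulVec, h, mulVec_zero]

theorem IsHamiltonian.conjTranspose_mul_Jmat {Q : Matrix (Fin n ⊕ Fin n) (Fin n ⊕ Fin n) ℂ}
    (hQ : IsHamiltonian Q) : Qᴴ * Jmat n = -(Jmat n * Q) := by
  have hQJ : Q * Jmat n = -(Jmat n * Qᴴ) := by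
    rw [hQ, conjTranspose_mul, Jmat_conjTranspose, neg_mul]
  have hQH : Qᴴ = Jmat n * Q * Jmat n := by
    rw [mul_assoc, hQJ, mul_neg, ← mul_assoc, Jmat_mul_Jmat, neg_one_mul, neg_neg]
  rw [hQH, mul_assoc, Jmat_mul_Jmat, mul_neg_one]

theorem IsHamiltonian.conjTranspose_mulVec_Jmat_mulVec
    {Q : Matrix (Fin n ⊕ Fin n) (Fin n ⊕ Fin n) ℂ} (hQ : IsHamiltonian Q) {lam : ℂ}
    {x : Fin n ⊕ Fin n → ℂ} (hx : Q *ᵥ x = lam • x) :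
    Qᴴ *ᵥ Jmat n *ᵥ x = -lam • Jmat n *ᵥ x := by
  rw [mulVec_mulVec, hQ.conjTranspose_mul_Jmat, neg_mulVec, ← mulVec_mulVec, hx, mulVec_smul,
    neg_smul]

theorem IsHamiltonian.smul_Jmat_mulVec_eq_smul {x y : Fin n ⊕ Fin n → ℂ}
    (hH : IsHamiltonian (vecMulVec y (star x))) :
    -(star y ⬝ᵥ x) • Jmat n *ᵥ x = (star x ⬝ᵥ Jmat n *ᵥ x) • y := by
  have h := congrArg (· *ᵥ x) hH
  simp only [conjTranspose_mul, conjTranspose_vecMulVec, star_star, Jmat_conjTranspose, neg_mul,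
    neg_mulVec, ← mulVec_mulVec, vecMulVec_mulVec, op_smul_eq_smul, mulVec_smul] at h
  rw [h, neg_smul]

end Jmat

/-- If `Q` is Hamiltonian with right eigenvector `x` and left eigenvector `y` for `λ`,
`yᴴ x ≠ 0`, and the rank-one matrix `y xᴴ` is Hamiltonian, then `λ` is purely imaginary. -/
theorem hamiltonian_rankOne_implies_imaginary (n : ℕ)
    (Q : Matrix (Fin n ⊕ Fin n) (Fin n ⊕ Fin n) ℂ) (hQ : IsHamiltonian Q)
    (lam : ℂ) (x y : Fin n ⊕ Fin n → ℂ)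
    (hxe : Q *ᵥ x = lam • x)
    (hye : Qᴴ *ᵥ y = (starRingEnd ℂ) lam • y)
    (hyx : star y ⬝ᵥ x ≠ 0)
    (hH : IsHamiltonian (Matrix.vecMulVec y (star x))) :
    lam.re = 0 := by
  have hx : x ≠ 0 := by
    rintro rfl
    exact hyx (dotProduct_zero _)
  have h := eq_of_mulVec_eq_smul_of_smul_eq_smul (hQ.conjTranspose_mulVec_Jmat_mulVec hxe) hye
    (Jmat_mulVec_ne_zero hx) (neg_ne_zero.mpr hyx) hH.smul_Jmat_mulVec_eq_smul
  have := congrArg Complex.re h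
  simp only [Complex.neg_re, Complex.conj_re] at this
  linarith
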